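/- Let A, B ∈ ℝ with B² ≤ 2A, and set h(t) := At²/2 + Bt + 1. If ∫_ℝ φ'(t)² h(t) dt ≥ (2A − B²) ∫_ℝ φ(t)² / h(t) dt for every φ ∈ C¹_c(ℝ), then B² = 2A. -/

import Mathlib

open MeasureTheory Set

noncomputable section

/-- The partial derivative in the first coordinate of a function on `ℝ²`. -/
def pd1 (φ : ℝ × ℝ → ℝ) (x : ℝ × ℝ) : ℝ := fderiv ℝ φ x (1, 0)

/-- The partial derivative in the second coordinate of a function on `ℝ²`. -/
def pd2 (φ : ℝ × ℝ → ℝ) (x : ℝ × ℝ) : ℝ := fderiv ℝ φ x (0, 1)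

/-- Smooth test functions compactly supported in `ω`. -/
def IsTestOn (ω : Set (ℝ × ℝ)) (φ : ℝ × ℝ → ℝ) : Prop :=
  ContDiff ℝ (⊤ : ℕ∞) φ ∧ HasCompactSupport φ ∧ tsupport φ ⊆ ω

/-- `g` is the weak partial derivative of `u` in the first variable on `ω`. -/
def HasWeakPd1On (ω : Set (ℝ × ℝ)) (u g : ℝ × ℝ → ℝ) : Prop :=
  ∀ φ, IsTestOn ω φ → ∫ x in ω, u x * pd1 φ x = - ∫ x in ω, g x * φ x

/-- `g` is the weak partial derivative of `u` in the second variable on `ω`. -/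
def HasWeakPd2On (ω : Set (ℝ × ℝ)) (u g : ℝ × ℝ → ℝ) : Prop :=
  ∀ φ, IsTestOn ω φ → ∫ x in ω, u x * pd2 φ x = - ∫ x in ω, g x * φ x

/-- `u ∈ L^p_loc(ω)`. -/
def MemLpLocOn (ω : Set (ℝ × ℝ)) (p : ℝ) (u : ℝ × ℝ → ℝ) : Prop :=
  ∀ K, K ⊆ ω → IsCompact K → MemLp u (ENNReal.ofReal p) (volume.restrict K)

/-- `u ∈ W^{1,p}_loc(ω)` with specified representatives `u1, u2` of the weak
partial derivatives. -/
structure W1pLocRep (ω : Set (ℝ × ℝ)) (p : ℝ) (u u1 u2 : ℝ × ℝ → ℝ) : Prop where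
  mem : MemLpLocOn ω p u
  mem1 : MemLpLocOn ω p u1
  mem2 : MemLpLocOn ω p u2
  wd1 : HasWeakPd1On ω u u1
  wd2 : HasWeakPd2On ω u u2

/-- `u ∈ W^{1,p}_loc(ω)`. -/
def MemW1pLocOn (ω : Set (ℝ × ℝ)) (p : ℝ) (u : ℝ × ℝ → ℝ) : Prop :=
  ∃ u1 u2, W1pLocRep ω p u u1 u2

/-- The intrinsic gradient `∇^f f = ∂_η f + f ∂_τ f`, computed from the given
representatives `fη, fτ` of the weak partial derivatives of `f`. -/
def intGrad (f fη fτ : ℝ × ℝ → ℝ) (x : ℝ × ℝ) : ℝ := fη x + f x * fτ x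

/-- First variation `I_f(φ)` of the sub-Riemannian graph area functional, where
`fη, fτ` are the weak partial derivatives of `f` and `φ1, φ2` those of the test
function `φ`. -/
def IF (ω : Set (ℝ × ℝ)) (f fη fτ φ φ1 φ2 : ℝ × ℝ → ℝ) : ℝ :=
  - ∫ x in ω, (intGrad f fη fτ x / Real.sqrt (1 + (intGrad f fη fτ x) ^ 2)) *
      ((φ1 x + f x * φ2 x) + fτ x * φ x)

/-- Second variation `II_f(φ)` of the sub-Riemannian graph area functional. -/
def IIF (ω : Set (ℝ × ℝ)) (f fη fτ φ φ1 φ2 : ℝ × ℝ → ℝ) : ℝ :=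
  ∫ x in ω,
    (((φ1 x + f x * φ2 x) + fτ x * φ x) ^ 2 / (1 + (intGrad f fη fτ x) ^ 2) ^ ((3:ℝ)/2)
      + (intGrad f fη fτ x / Real.sqrt (1 + (intGrad f fη fτ x) ^ 2)) * (2 * φ x * φ2 x))

/-- `f` is stationary for the sub-Riemannian graph area functional. -/
def IsStationarySR (ω : Set (ℝ × ℝ)) (f fη fτ : ℝ × ℝ → ℝ) : Prop :=
  ∀ φ, IsTestOn ω φ → IF ω f fη fτ φ (pd1 φ) (pd2 φ) = 0

/-- `f` is stable for the sub-Riemannian graph area functional. -/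
def IsStable (ω : Set (ℝ × ℝ)) (f fη fτ : ℝ × ℝ → ℝ) : Prop :=
  IsStationarySR ω f fη fτ ∧ ∀ φ, IsTestOn ω φ → 0 ≤ IIF ω f fη fτ φ (pd1 φ) (pd2 φ)

/-- The map `Ψ(t,ζ) = (t, χ(t,ζ))`. -/
def LagMap (χ : ℝ × ℝ → ℝ) (x : ℝ × ℝ) : ℝ × ℝ := (x.1, χ x)

/-- `Ψ(t,ζ) = (t, χ(t,ζ))` is an `f`-Lagrangian homeomorphism from `ωt` onto `ω`. -/
structure IsLagHomeo (ωt ω : Set (ℝ × ℝ)) (f χ : ℝ × ℝ → ℝ) : Prop where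
  bij : Set.BijOn (LagMap χ) ωt ω
  cont : ContinuousOn χ ωt
  cont_inv : ∃ Φ : ℝ × ℝ → ℝ × ℝ, Set.InvOn Φ (LagMap χ) ωt ω ∧ ContinuousOn Φ ω
  mono : ∀ t ζ₁ ζ₂ : ℝ, (t, ζ₁) ∈ ωt → (t, ζ₂) ∈ ωt → ζ₁ ≤ ζ₂ → χ (t, ζ₁) ≤ χ (t, ζ₂)
  ode : ∀ ζ a b : ℝ, a ≤ b → (∀ t ∈ Set.Icc a b, (t, ζ) ∈ ωt) →
      IntervalIntegrable (fun t => f (t, χ (t, ζ))) volume a b ∧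
      χ (b, ζ) = χ (a, ζ) + ∫ t in a..b, f (t, χ (t, ζ))

/-- A map `ℝ² → ℝ²` is in `W^{1,p}_loc(ω)` if both components are. -/
def MemW1pLocOnMap (ω : Set (ℝ × ℝ)) (p : ℝ) (Ψ : ℝ × ℝ → ℝ × ℝ) : Prop :=
  MemW1pLocOn ω p (fun x => (Ψ x).1) ∧ MemW1pLocOn ω p (fun x => (Ψ x).2)

/-- `Ψ(t,ζ) = (t, χ(t,ζ))` is a `p`-bi-Sobolev `f`-Lagrangian homeomorphism. -/
structure IsBiSobolevLagHomeo (ωt ω : Set (ℝ × ℝ)) (p : ℝ) (f χ : ℝ × ℝ → ℝ) : Prop where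
  lag : IsLagHomeo ωt ω f χ
  sob : MemW1pLocOnMap ωt p (LagMap χ)
  sob_inv : ∃ Φ : ℝ × ℝ → ℝ × ℝ, Set.InvOn Φ (LagMap χ) ωt ω ∧ MemW1pLocOnMap ω p Φ

/-- One-dimensional test functions compactly supported in `s`. -/
def IsTestOn1 (s : Set ℝ) (φ : ℝ → ℝ) : Prop :=
  ContDiff ℝ (⊤ : ℕ∞) φ ∧ HasCompactSupport φ ∧ tsupport φ ⊆ s

/-- `g` is the weak derivative of `u` on `s ⊆ ℝ`. -/
def HasWeakDerivOn1 (s : Set ℝ) (u g : ℝ → ℝ) : Prop :=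
  ∀ φ, IsTestOn1 s φ → ∫ t in s, u t * deriv φ t = - ∫ t in s, g t * φ t

/-- `u ∈ L^p_loc(s)`, `s ⊆ ℝ`. -/
def MemLpLocOn1 (s : Set ℝ) (p : ℝ) (u : ℝ → ℝ) : Prop :=
  ∀ K, K ⊆ s → IsCompact K → MemLp u (ENNReal.ofReal p) (volume.restrict K)

/-- `u ∈ W^{1,p}_loc(s)`, `s ⊆ ℝ`. -/
def MemW1pLocOn1 (s : Set ℝ) (p : ℝ) (u : ℝ → ℝ) : Prop :=
  ∃ g, MemLpLocOn1 s p u ∧ MemLpLocOn1 s p g ∧ HasWeakDerivOn1 s u g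

/-- The Heisenberg group product on `ℝ³`. -/
def Hmul (p q : ℝ × ℝ × ℝ) : ℝ × ℝ × ℝ :=
  (p.1 + q.1, p.2.1 + q.2.1, p.2.2 + q.2.2 + (p.1 * q.2.1 - q.1 * p.2.1) / 2)

/-- The intrinsic graph of `f : ω → ℝ` in the first Heisenberg group. -/
def intrinsicGraph (ω : Set (ℝ × ℝ)) (f : ℝ × ℝ → ℝ) : Set (ℝ × ℝ × ℝ) :=
  (fun w : ℝ × ℝ => Hmul (0, w.1, w.2) (f w, 0, 0)) '' ω


open Real Asymptotics

set_option maxHeartbeats 1000000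

noncomputable def mm (θ : ℝ) : ℝ := max (1 - θ^2) 0

lemma mm_cont : Continuous mm := (continuous_const.sub (continuous_pow 2)).max continuous_const

lemma hasDerivAt_g (θ : ℝ) : HasDerivAt (fun x => (mm x)^2) (-4*θ* mm θ) θ := by
  rcases lt_trichotomy (1 - θ^2) 0 with hlt | heq | hgt
  · -- locally zero
    have hs : IsOpen {x : ℝ | 1 - x^2 < 0} :=
      isOpen_lt (continuous_const.sub (continuous_pow 2)) continuous_const
    have hev : (fun x => (mm x)^2) =ᶠ[nhds θ] fun _ => (0:ℝ) := by
      filter_upwards [hs.mem_nhds hlt] with x hx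
      simp [mm, max_eq_right hx.le]
    rw [show -4*θ*mm θ = 0 by simp [mm, max_eq_right hlt.le]]
    exact (hasDerivAt_const θ 0).congr_of_eventuallyEq hev
  · -- boundary: derivative 0 via isLittleO
    have hm : mm θ = 0 := by simp [mm, heq]
    rw [show -4*θ*mm θ = 0 by rw [hm]; ring]
    rw [hasDerivAt_iff_isLittleO]
    have hg0 : mm θ ^ 2 = 0 := by rw [hm]; ring
    simp only [hg0, smul_zero, sub_zero]
    have h1 : (fun x : ℝ => (mm x)^2) =O[nhds θ] fun x => (1 - x^2)^2 := by
      apply Asymptotics.isBigO_of_le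
      intro x
      have h2 : (mm x)^2 ≤ (1-x^2)^2 := by
        rcases le_or_gt (1-x^2) 0 with hx | hx
        · have : mm x = 0 := max_eq_right hx
          rw [this]; simpa using sq_nonneg (1-x^2)
        · have : mm x = 1 - x^2 := max_eq_left hx.le
          rw [this]
      have h3 : (0:ℝ) ≤ (mm x)^2 := sq_nonneg _
      simp only [Real.norm_eq_abs, abs_of_nonneg h3, abs_of_nonneg (sq_nonneg (1-x^2))]
      exact h2
    have hθ2 : θ^2 = 1 := by linarith
    have h4 : (fun x : ℝ => (1 - x^2)^2) =o[nhds θ] fun x => x - θ := by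
      have heqf : (fun x : ℝ => (1 - x^2)^2) = fun x => (x - θ) * ((x - θ)*(x+θ)^2) := by
        funext x; linear_combination (2*x^2 - 1 - θ^2) * hθ2
      rw [heqf]
      have hO : (fun x : ℝ => x - θ) =O[nhds θ] fun x => x - θ := isBigO_refl _ _
      have ho : (fun x : ℝ => (x - θ)*(x+θ)^2) =o[nhds θ] fun _ => (1:ℝ) := by
        rw [Asymptotics.isLittleO_one_iff]
        have : Filter.Tendsto (fun x : ℝ => (x - θ)*(x+θ)^2) (nhds θ) (nhds ((θ-θ)*(θ+θ)^2)) := by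
          exact ((Filter.tendsto_id.sub_const θ).mul (((Filter.tendsto_id.add_const θ)).pow 2))
        simpa using this
      simpa using hO.mul_isLittleO ho
    exact h1.trans_isLittleO h4
  · -- interior
    have hs : IsOpen {x : ℝ | 0 < 1 - x^2} :=
      isOpen_lt continuous_const (continuous_const.sub (continuous_pow 2))
    have hd : HasDerivAt (fun x : ℝ => (1 - x^2)^2) (-4*θ*mm θ) θ := by
      have inner : HasDerivAt (fun x : ℝ => 1 - x^2) (-(2*θ)) θ := by
        simpa using (hasDerivAt_pow 2 θ).const_sub 1
      have := inner.pow 2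
      refine this.congr_deriv ?_
      simp [mm, max_eq_left hgt.le]; ring
    apply hd.congr_of_eventuallyEq
    filter_upwards [hs.mem_nhds hgt] with x hx
    simp [mm, max_eq_left hx.le]

/-- Let `B² ≤ 2A` and `h(t) = At²/2 + Bt + 1`. If
`∫ φ'(t)² h(t) dt ≥ (2A − B²) ∫ φ(t)²/h(t) dt` for every `φ ∈ C¹_c(ℝ)`, then `B² = 2A`. -/
theorem stmt15 (A B : ℝ) (hAB : B ^ 2 ≤ 2 * A)
    (h : ∀ φ : ℝ → ℝ, ContDiff ℝ 1 φ → HasCompactSupport φ →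
      (2 * A - B ^ 2) * ∫ t : ℝ, (φ t) ^ 2 / (A * t ^ 2 / 2 + B * t + 1) ≤
        ∫ t : ℝ, (deriv φ t) ^ 2 * (A * t ^ 2 / 2 + B * t + 1)) :
    B ^ 2 = 2 * A := by
  by_contra hne
  have hlt : B^2 < 2*A := lt_of_le_of_ne hAB hne
  have hL : 0 < 2*A - B^2 := by linarith
  have hA : 0 < A := by nlinarith [sq_nonneg B]
  set c := Real.sqrt (2*A - B^2) with hcdef
  have hc : 0 < c := Real.sqrt_pos.2 hL
  have hc2 : c^2 = 2*A - B^2 := Real.sq_sqrt hL.le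
  set σ : ℝ → ℝ := fun t => Real.arctan ((A*t+B)/c) with hσdef
  set σd : ℝ → ℝ := fun t => A*c/((A*t+B)^2+c^2) with hσddef
  have hD : ∀ t : ℝ, 0 < (A*t+B)^2 + c^2 := fun t => by positivity
  have hσ : ∀ t, HasDerivAt σ (σd t) t := by
    intro t
    have h1 : HasDerivAt (fun t : ℝ => (A*t+B)/c) (A/c) t := by
      simpa using (((hasDerivAt_id t).const_mul A).add_const B).div_const c
    have h2 := (Real.hasDerivAt_arctan ((A*t+B)/c)).comp t h1
    refine h2.congr_deriv ?_
    rw [hσddef]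
    field_simp
    ring
  have hh : ∀ t : ℝ, A*t^2/2+B*t+1 = ((A*t+B)^2+c^2)/(2*A) := by
    intro t
    rw [eq_div_iff (by positivity)]
    linear_combination -hc2
  have hhpos : ∀ t : ℝ, 0 < A*t^2/2+B*t+1 := fun t => by rw [hh t]; positivity
  have hσdh : ∀ t : ℝ, σd t * (A*t^2/2+B*t+1) = c/2 := by
    intro t
    rw [hh t, hσddef]
    field_simp
  set φ : ℝ → ℝ := fun t => mm (σ t) ^ 2 with hφdef
  have hφd : ∀ t, HasDerivAt φ ((-4*(σ t)*mm (σ t)) * σd t) t :=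
    fun t => (hasDerivAt_g (σ t)).comp t (hσ t)
  have hderiv : deriv φ = fun t => (-4*(σ t)*mm (σ t)) * σd t := funext fun t => (hφd t).deriv
  have hσ_cont : Continuous σ := by
    apply Real.continuous_arctan.comp
    continuity
  have hσd_cont : Continuous σd := by
    apply continuous_const.div
    · continuity
    · exact fun t => (hD t).ne'
  have hφ_cd : ContDiff ℝ 1 φ := by
    rw [contDiff_one_iff_deriv]
    refine ⟨fun t => (hφd t).differentiableAt, ?_⟩
    rw [hderiv]
    exact ((continuous_const.mul hσ_cont).mul (mm_cont.comp hσ_cont)).mul hσd_cont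
  -- support
  set t₁ : ℝ := (c * Real.tan (-1) - B)/A with ht₁def
  set t₂ : ℝ := (c * Real.tan 1 - B)/A with ht₂def
  have h1pi : (1:ℝ) < π/2 := by have := Real.pi_gt_three; linarith
  have hKmem : ∀ t, mm (σ t) ≠ 0 → t ∈ Icc t₁ t₂ := by
    intro t hmt
    have h12 : 0 < 1 - (σ t)^2 := by
      by_contra hcon
      push_neg at hcon
      exact hmt (max_eq_right hcon)
    have hσlt : σ t < 1 := by nlinarith
    have hσgt : -1 < σ t := by nlinarith
    have htan : Real.tan (σ t) = (A*t+B)/c := Real.tan_arctan _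
    have hin1 : σ t ∈ Ioo (-(π/2)) (π/2) :=
      ⟨Real.neg_pi_div_two_lt_arctan _, Real.arctan_lt_pi_div_two _⟩
    have hin2 : (1:ℝ) ∈ Ioo (-(π/2)) (π/2) := ⟨by linarith, h1pi⟩
    have hin3 : (-1:ℝ) ∈ Ioo (-(π/2)) (π/2) := ⟨by linarith, by linarith⟩
    have hlt2 : (A*t+B)/c < Real.tan 1 := htan ▸ Real.strictMonoOn_tan hin1 hin2 hσlt
    have hgt2 : Real.tan (-1) < (A*t+B)/c := htan ▸ Real.strictMonoOn_tan hin3 hin1 hσgt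
    have hlt3 : A*t+B < c * Real.tan 1 := by
      have := (div_lt_iff₀ hc).1 hlt2; linarith
    have hgt3 : c * Real.tan (-1) < A*t+B := by
      have := (lt_div_iff₀ hc).1 hgt2; linarith
    constructor
    · rw [ht₁def, div_le_iff₀ hA]; linarith
    · rw [ht₂def, le_div_iff₀ hA]; linarith
  have hφsupp : ∀ t ∉ Icc t₁ t₂, φ t = 0 := by
    intro t ht
    have hmz : mm (σ t) = 0 := by
      by_contra hcon
      exact ht (hKmem t hcon)
    simp [hφdef, hmz]
  have hcs : HasCompactSupport φ := HasCompactSupport.intro isCompact_Icc hφsupp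
  have ht12 : t₁ ≤ t₂ := by
    have htn : Real.tan (-1) ≤ Real.tan 1 := by
      rw [Real.tan_neg]
      have := Real.tan_pos_of_pos_of_lt_pi_div_two (x := 1) one_pos h1pi
      linarith
    rw [ht₁def, ht₂def]
    apply div_le_div_of_nonneg_right ?_ hA.le
    nlinarith
  have hred : ∀ F : ℝ → ℝ, (∀ t ∉ Icc t₁ t₂, F t = 0) → ∫ t, F t = ∫ t in t₁..t₂, F t := by
    intro F hF
    have hsup : Function.support F ⊆ Icc t₁ t₂ := by
      intro t ht
      by_contra hcon
      exact ht (hF t hcon)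
    have h1 : ∫ t, F t = ∫ t in Icc t₁ t₂, F t := by
      rw [← MeasureTheory.integral_indicator measurableSet_Icc, Set.indicator_eq_self.2 hsup]
    rw [h1, MeasureTheory.integral_Icc_eq_integral_Ioc, ← intervalIntegral.integral_of_le ht12]
  -- endpoints
  have hσt₁ : σ t₁ = -1 := by
    show Real.arctan ((A*((c * Real.tan (-1) - B)/A)+B)/c) = -1
    rw [show (A*((c * Real.tan (-1) - B)/A)+B)/c = Real.tan (-1) by
      field_simp
      try ring]
    exact Real.arctan_tan (by linarith) (by linarith)
  have hσt₂ : σ t₂ = 1 := by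
    show Real.arctan ((A*((c * Real.tan 1 - B)/A)+B)/c) = 1
    rw [show (A*((c * Real.tan 1 - B)/A)+B)/c = Real.tan 1 by
      field_simp
      try ring]
    exact Real.arctan_tan (by linarith) h1pi
  -- change of variables
  have hsub : ∀ G : ℝ → ℝ, Continuous G →
      ∫ t in t₁..t₂, σd t * G (σ t) = ∫ θ in (-1:ℝ)..1, G θ := by
    intro G hG
    have := intervalIntegral.integral_comp_smul_deriv (f := σ) (f' := σd) (g := G)
      (a := t₁) (b := t₂) (fun x _ => hσ x) hσd_cont.continuousOn hG
    rw [hσt₁, hσt₂] at this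
    simpa [smul_eq_mul] using this
  have hI1 : ∫ t : ℝ, (deriv φ t)^2 * (A*t^2/2+B*t+1)
      = ∫ θ in (-1:ℝ)..1, (c/2) * (-4*θ*mm θ)^2 := by
    rw [hred _ ?_]
    · rw [← hsub (fun θ => (c/2) * (-4*θ*mm θ)^2) (by
        apply continuous_const.mul
        exact ((continuous_const.mul continuous_id).mul mm_cont).pow 2)]
      apply intervalIntegral.integral_congr
      intro t _
      rw [hderiv]
      show (-4*(σ t)*mm (σ t) * σd t)^2 * (A*t^2/2+B*t+1) = σd t * ((c/2) * (-4*(σ t)*mm (σ t))^2)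
      linear_combination ((-4*(σ t)*mm (σ t))^2 * σd t) * hσdh t
    · intro t ht
      have hmz : mm (σ t) = 0 := by
        by_contra hcon
        exact ht (hKmem t hcon)
      rw [hderiv]
      simp [hmz]
  have hI2 : ∫ t : ℝ, (φ t)^2 / (A*t^2/2+B*t+1)
      = ∫ θ in (-1:ℝ)..1, (2/c) * (mm θ^2)^2 := by
    rw [hred _ ?_]
    · rw [← hsub (fun θ => (2/c) * (mm θ^2)^2) (by
        apply continuous_const.mul
        exact (mm_cont.pow 2).pow 2)]
      apply intervalIntegral.integral_congr
      intro t _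
      show (mm (σ t) ^ 2)^2 / (A*t^2/2+B*t+1) = σd t * ((2/c) * (mm (σ t)^2)^2)
      rw [div_eq_iff (hhpos t).ne']
      have hone : (2/c) * (σd t * (A*t^2/2+B*t+1)) = 1 := by
        rw [hσdh t]; field_simp
      linear_combination (-(mm (σ t)^2)^2) * hone
    · intro t ht
      have hmz : mm (σ t) = 0 := by
        by_contra hcon
        exact ht (hKmem t hcon)
      simp [hφdef, hmz]
  -- polynomial integrals
  have hpoly1 : ∫ θ in (-1:ℝ)..1, (c/2) * (-4*θ*mm θ)^2 = (c/2) * (256/105) := by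
    rw [intervalIntegral.integral_const_mul]
    congr 1
    have hcg : EqOn (fun θ : ℝ => (-4*θ*mm θ)^2) (fun θ : ℝ => 16*θ^2*(1-θ^2)^2) (uIcc (-1:ℝ) 1) := by
      intro θ hθ
      rw [uIcc_of_le (by norm_num)] at hθ
      have h1 : (0:ℝ) ≤ 1 - θ^2 := by
        obtain ⟨h1, h2⟩ := hθ
        nlinarith
      simp only [mm, max_eq_left h1]
      ring
    rw [intervalIntegral.integral_congr hcg]
    have hP : ∀ θ : ℝ, HasDerivAt (fun x : ℝ => 16*(x^3/3 - 2*x^5/5 + x^7/7))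
        (16*θ^2*(1-θ^2)^2) θ := by
      intro θ
      have := (((hasDerivAt_pow 3 θ).div_const 3).sub
        (((hasDerivAt_pow 5 θ).const_mul 2).div_const 5)).add ((hasDerivAt_pow 7 θ).div_const 7)
      have := this.const_mul 16
      refine this.congr_deriv ?_
      push_cast
      ring
    rw [intervalIntegral.integral_eq_sub_of_hasDerivAt (fun x _ => hP x)
      ((Continuous.intervalIntegrable (by
        exact (continuous_const.mul (continuous_pow 2)).mul
          ((continuous_const.sub (continuous_pow 2)).pow 2)) _ _))]
    norm_num
  have hpoly2 : ∫ θ in (-1:ℝ)..1, (2/c) * (mm θ^2)^2 = (2/c) * (256/315) := by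
    rw [intervalIntegral.integral_const_mul]
    congr 1
    have hcg : EqOn (fun θ : ℝ => (mm θ^2)^2) (fun θ : ℝ => (1-θ^2)^4) (uIcc (-1:ℝ) 1) := by
      intro θ hθ
      rw [uIcc_of_le (by norm_num)] at hθ
      have h1 : (0:ℝ) ≤ 1 - θ^2 := by
        obtain ⟨h1, h2⟩ := hθ
        nlinarith
      simp only [mm, max_eq_left h1]
      ring
    rw [intervalIntegral.integral_congr hcg]
    have hP : ∀ θ : ℝ, HasDerivAt
        (fun x : ℝ => x - 4*x^3/3 + 6*x^5/5 - 4*x^7/7 + x^9/9) ((1-θ^2)^4) θ := by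
      intro θ
      have := ((((hasDerivAt_id θ).sub (((hasDerivAt_pow 3 θ).const_mul 4).div_const 3)).add
        (((hasDerivAt_pow 5 θ).const_mul 6).div_const 5)).sub
        (((hasDerivAt_pow 7 θ).const_mul 4).div_const 7)).add ((hasDerivAt_pow 9 θ).div_const 9)
      refine this.congr_deriv ?_
      push_cast
      ring
    rw [intervalIntegral.integral_eq_sub_of_hasDerivAt (fun x _ => hP x)
      ((Continuous.intervalIntegrable (by
        exact (continuous_const.sub (continuous_pow 2)).pow 4) _ _))]
    norm_num
  have key := h φ hφ_cd hcs
  rw [hI1, hI2, hpoly1, hpoly2] at key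
  have hLHS : (2*A - B^2) * ((2/c)*(256/315)) = c * (512/315) := by
    rw [← hc2]
    field_simp
    ring
  rw [hLHS] at key
  nlinarith [key, hc]

end
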